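/- arXiv:2308.09211 — 5 statements merged into one kernel-verified Lean document; each statement's English description precedes it below -/
import Mathlib

section
/- Let S be a finite state set, A a finite action set, and q, q' : S × A → Δ(S) transition kernels such that for every pure Markov strategy profile a = (a_s)_{s∈S} ∈ A^{|S|}, both q(·|·, a_·) and q'(·|·, a_·) induce irreducible Markov chains on S with the same (unique) invariant distribution π(a). Let α̃ : S → ℝ^{|A|} satisfy Σ_{a∈A} α̃_s(a) = 1 for each s, and let β̃ ∈ ℝ^{|S|} satisfy Σ_{s∈S} Σ_{a∈A} β̃_s α̃_s(a) q(t|s,a) = β̃_t for all t ∈ S. Then Σ_{s∈S} Σ_{a∈A} β̃_s α̃_s(a) q'(t|s,a) = β̃_t for all t ∈ S. -/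
/-!
Fix `t` and put `x s a = δ_{st} - q'(t | s, a)`. Invariance of `π(m)` under `q'` says that
`π(m) ⬝ x(·, m ·) = 0` for every pure policy `m`. For a constant policy `a₀` this is the
solvability condition of the Poisson equation `y - Q_{a₀} y = x(·, a₀)`, since the irreducible
chain `Q_{a₀}` has `ℝ ∙ π(a₀)` as its space of left fixed vectors. Deviating from `a₀` at a
single state shows that the same `y` satisfies `y s - ∑ u, q(u | s, a) y u = x s a` for every
pair `(s, a)`. Hence `q'(t | ·, ·) = δ_{·t} - (y - q y)`, and any `β` invariant under `α` with
`q` annihilates `y - q y`.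
-/

open Finset Module Matrix

namespace Matrix

theorem mem_range_mulVecLin_iff_dotProduct_eq_zero {K m n : Type*} [Field K] [Fintype m]
    [DecidableEq m] [Fintype n] (M : Matrix m n K) {v : m → K} (hv : v ≠ 0)
    (hker : LinearMap.ker Mᵀ.mulVecLin = K ∙ v) (x : m → K) :
    x ∈ LinearMap.range M.mulVecLin ↔ v ⬝ᵥ x = 0 := by
  set f := dotProductEquiv K m v
  have hf : f ≠ 0 := fun h => hv ((dotProductEquiv K m).map_eq_zero_iff.1 h)
  have hv_ker : v ᵥ* M = 0 := by
    rw [← mulVec_transpose, ← mulVecLin_apply, ← LinearMap.mem_ker, hker]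
    exact Submodule.mem_span_singleton_self v
  have hle : LinearMap.range M.mulVecLin ≤ LinearMap.ker f := by
    rintro _ ⟨y, rfl⟩
    simp [f, dotProduct_mulVec, hv_ker]
  have hrank : finrank K (LinearMap.range M.mulVecLin) + 1 = Fintype.card m := by
    change M.rank + 1 = _
    rw [← rank_transpose, rank, ← finrank_span_singleton hv (K := K), ← hker,
      LinearMap.finrank_range_add_finrank_ker, Module.finrank_fintype_fun_eq_card]
  have hker_f : finrank K (LinearMap.ker f) + 1 = Fintype.card m := by
    rw [Dual.finrank_ker_add_one_of_ne_zero hf, Module.finrank_fintype_fun_eq_card]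
  rw [Submodule.eq_of_le_of_finrank_le hle (by omega)]
  simp [f]

variable {n : Type*} [Fintype n] [DecidableEq n] {P : Matrix n n ℝ}

theorem vecMul_pow_eq_self {ν : n → ℝ} (h : ν ᵥ* P = ν) (k : ℕ) : ν ᵥ* P ^ k = ν := by
  induction k with
  | zero => simp
  | succ k ih => rw [pow_succ, ← vecMul_vecMul, ih, h]

theorem IsIrreducible.eq_zero_of_vecMul_eq_self (hP : P.IsIrreducible) {ν : n → ℝ}
    (hν : 0 ≤ ν) (hinv : ν ᵥ* P = ν) {j : n} (hj : ν j = 0) : ν = 0 := by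
  funext i
  obtain ⟨k, -, hk⟩ := (isIrreducible_iff_exists_pow_pos hP.nonneg).1 hP i j
  have hterms : ∀ s ∈ univ, ν s * (P ^ k) s j = 0 := by
    refine (sum_eq_zero_iff_of_nonneg fun s _ => ?_).1 ?_
    · exact mul_nonneg (hν s) (pow_apply_nonneg hP.nonneg k s j)
    · exact (congrFun (vecMul_pow_eq_self hinv k) j).trans hj
  exact (mul_eq_zero.1 (hterms i (mem_univ i))).resolve_right hk.ne'

-- The minimal ratio `c = μ j / π j` makes `μ - c • π` nonnegative, invariant and zero at `j`.
theorem IsIrreducible.eq_smul_of_vecMul_eq_self [Nonempty n] (hP : P.IsIrreducible)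
    {π : n → ℝ} (hπ : ∀ i, 0 < π i) (hπP : π ᵥ* P = π) {μ : n → ℝ} (hμP : μ ᵥ* P = μ) :
    ∃ c : ℝ, μ = c • π := by
  obtain ⟨j, -, hj⟩ := exists_min_image univ (fun i => μ i / π i) univ_nonempty
  refine ⟨μ j / π j, sub_eq_zero.1 (hP.eq_zero_of_vecMul_eq_self (j := j) ?_ ?_ ?_)⟩
  · intro i
    have := (le_div_iff₀ (hπ i)).1 (hj i (mem_univ i))
    simp only [Pi.zero_apply, Pi.sub_apply, Pi.smul_apply, smul_eq_mul]
    linarith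
  · rw [sub_vecMul, smul_vecMul, hμP, hπP]
  · simp [div_mul_cancel₀ _ (hπ j).ne']

theorem IsIrreducible.ker_transpose_one_sub [Nonempty n] (hP : P.IsIrreducible)
    {π : n → ℝ} (hπ : ∀ i, 0 < π i) (hπP : π ᵥ* P = π) :
    LinearMap.ker (1 - P)ᵀ.mulVecLin = ℝ ∙ π := by
  ext μ
  rw [LinearMap.mem_ker, mulVecLin_apply, mulVec_transpose, vecMul_sub, vecMul_one, sub_eq_zero,
    eq_comm, Submodule.mem_span_singleton]
  constructor
  · intro hμ
    obtain ⟨c, rfl⟩ := hP.eq_smul_of_vecMul_eq_self hπ hπP hμ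
    exact ⟨c, rfl⟩
  · rintro ⟨c, rfl⟩
    rw [smul_vecMul, hπP]

theorem IsIrreducible.exists_sub_mulVec_eq [Nonempty n] (hP : P.IsIrreducible)
    {π : n → ℝ} (hπ : ∀ i, 0 < π i) (hπP : π ᵥ* P = π) {x : n → ℝ} (hx : π ⬝ᵥ x = 0) :
    ∃ y, y - P *ᵥ y = x := by
  have hπ0 : π ≠ 0 := fun h => (hπ (Classical.arbitrary n)).ne' (congrFun h _)
  obtain ⟨y, hy⟩ := (mem_range_mulVecLin_iff_dotProduct_eq_zero (1 - P) hπ0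
    (hP.ker_transpose_one_sub hπ hπP) x).2 hx
  exact ⟨y, by rwa [mulVecLin_apply, sub_mulVec, one_mulVec] at hy⟩

end Matrix

def policyMatrix {S A : Type*} (q : S → A → S → ℝ) (m : S → A) : Matrix S S ℝ :=
  Matrix.of fun s t => q s (m s) t

section Policy

variable {S A : Type*} [Fintype S] [DecidableEq S] {q : S → A → S → ℝ}

-- The residual of the Poisson equation under the deviation `update m₀ s a` is orthogonal to its
-- invariant measure and vanishes off `s`, so it vanishes at `s` as well.
theorem sub_sum_mul_eq_of_forall_policy {π : (S → A) → S → ℝ} (hπ : ∀ m s, 0 < π m s)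
    (hπq : ∀ m, π m ᵥ* policyMatrix q m = π m) {x : S → A → ℝ}
    (hx : ∀ m, π m ⬝ᵥ (fun s => x s (m s)) = 0) {m₀ : S → A} {y : S → ℝ}
    (hy : y - policyMatrix q m₀ *ᵥ y = fun s => x s (m₀ s)) (s : S) (a : A) :
    y s - ∑ u, q s a u * y u = x s a := by
  set m := Function.update m₀ s a
  set r := y - policyMatrix q m *ᵥ y - fun s => x s (m s)
  have hr : π m ⬝ᵥ r = 0 := by
    rw [dotProduct_sub, dotProduct_sub, dotProduct_mulVec, hπq, sub_self, hx, sub_zero]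
  have hr_single : π m ⬝ᵥ r = π m s * r s := by
    refine Finset.sum_eq_single s (fun s' _ hs' => ?_) (by simp)
    have hrow : m s' = m₀ s' := Function.update_of_ne hs' _ _
    have hrow_mulVec : (policyMatrix q m *ᵥ y) s' = (policyMatrix q m₀ *ᵥ y) s' := by
      simp only [mulVec, dotProduct, policyMatrix, of_apply, hrow]
    have hys' := congrFun hy s'
    simp only [Pi.sub_apply] at hys'
    simp only [r, Pi.sub_apply, hrow_mulVec, hrow, hys', sub_self, mul_zero]
  have hrs : r s = 0 := (mul_eq_zero.1 (hr_single ▸ hr)).resolve_left (hπ m s).ne'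
  simpa [r, m, sub_eq_zero, mulVec, dotProduct, policyMatrix] using hrs

end Policy

theorem sum_sum_mul_sub_sum_mul_eq_zero {S A : Type*} [Fintype S] [Fintype A]
    {q : S → A → S → ℝ} {α : S → A → ℝ} (hα : ∀ s, ∑ a, α s a = 1) {β : S → ℝ}
    (hβ : ∀ t, ∑ s, ∑ a, β s * α s a * q s a t = β t) (y : S → ℝ) :
    ∑ s, ∑ a, β s * α s a * (y s - ∑ u, q s a u * y u) = 0 := by
  have hy : ∑ s, ∑ a, β s * α s a * y s = ∑ s, β s * y s := by
    simp only [← sum_mul, ← mul_sum, hα, mul_one]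
  have hqy : ∑ s, ∑ a, β s * α s a * ∑ u, q s a u * y u = ∑ u, β u * y u := by
    calc ∑ s, ∑ a, β s * α s a * ∑ u, q s a u * y u
        = ∑ s, ∑ a, ∑ u, β s * α s a * q s a u * y u := by simp only [mul_sum, mul_assoc]
      _ = ∑ u, ∑ s, ∑ a, β s * α s a * q s a u * y u :=
        (sum_congr rfl fun _ _ => sum_comm).trans sum_comm
      _ = ∑ u, β u * y u := by simp only [← sum_mul, hβ]
  simp only [mul_sub, sum_sub_distrib, hy, hqy, sub_self]

theorem stmt_0_general {S A : Type} [Fintype S] [DecidableEq S] [Nonempty S] [Fintype A] [Nonempty A]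
    (q q' : S → A → S → ℝ)
    (hq0 : ∀ s a t, 0 ≤ q s a t)
    (π : (S → A) → S → ℝ)
    (hπpos : ∀ m s, 0 < π m s)
    (hinv : ∀ m : S → A, ∀ t, ∑ s, π m s * q s (m s) t = π m t)
    (hinv' : ∀ m : S → A, ∀ t, ∑ s, π m s * q' s (m s) t = π m t)
    (hirr : ∀ m : S → A, ∀ s t : S, ∃ n : ℕ, 0 < n ∧
      0 < ((Matrix.of fun s' t' => q s' (m s') t') ^ n) s t)
    (α : S → A → ℝ) (hα : ∀ s, ∑ a, α s a = 1)
    (β : S → ℝ) (hβ : ∀ t, ∑ s, ∑ a, β s * α s a * q s a t = β t) :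
    ∀ t, ∑ s, ∑ a, β s * α s a * q' s a t = β t := by
  intro t
  obtain ⟨a₀⟩ := ‹Nonempty A›
  have hπq : ∀ m, π m ᵥ* policyMatrix q m = π m := fun m => funext (hinv m)
  set x : S → A → ℝ := fun s a => (Pi.single t 1 : S → ℝ) s - q' s a t
  have hx : ∀ m, π m ⬝ᵥ (fun s => x s (m s)) = 0 := fun m => by
    change π m ⬝ᵥ (Pi.single t 1 - fun s => q' s (m s) t) = 0
    rw [dotProduct_sub, dotProduct_single, mul_one]
    exact sub_eq_zero.2 (hinv' m t).symm
  have hirr₀ : (policyMatrix q fun _ => a₀).IsIrreducible :=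
    (isIrreducible_iff_exists_pow_pos fun s u => hq0 s a₀ u).2 (hirr _)
  obtain ⟨y, hy⟩ := hirr₀.exists_sub_mulVec_eq (hπpos _) (hπq _) (hx _)
  have hq' : ∀ s a, β s * α s a * q' s a t =
      β s * α s a * (Pi.single t 1 : S → ℝ) s - β s * α s a * (y s - ∑ u, q s a u * y u) :=
    fun s a => by
    rw [sub_sum_mul_eq_of_forall_policy hπpos hπq hx hy]
    ring
  have hδ : ∑ s, ∑ a, β s * α s a * (Pi.single t 1 : S → ℝ) s = β t := by
    simp [Pi.single_apply, ← mul_sum, hα]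
  simp only [hq', sum_sub_distrib, hδ, sum_sum_mul_sub_sum_mul_eq_zero hα hβ y, sub_zero]

theorem stmt_0 {S A : Type} [Fintype S] [DecidableEq S] [Nonempty S] [Fintype A] [Nonempty A]
    (q q' : S → A → S → ℝ)
    (hq0 : ∀ s a t, 0 ≤ q s a t) (hq1 : ∀ s a, ∑ t, q s a t = 1)
    (hq'0 : ∀ s a t, 0 ≤ q' s a t) (hq'1 : ∀ s a, ∑ t, q' s a t = 1)
    (π : (S → A) → S → ℝ)
    (hπpos : ∀ m s, 0 < π m s)
    (hπsum : ∀ m, ∑ s, π m s = 1)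
    (hinv : ∀ m : S → A, ∀ t, ∑ s, π m s * q s (m s) t = π m t)
    (hinv' : ∀ m : S → A, ∀ t, ∑ s, π m s * q' s (m s) t = π m t)
    (hirr : ∀ m : S → A, ∀ s t : S, ∃ n : ℕ, 0 < n ∧
      0 < ((Matrix.of fun s' t' => q s' (m s') t') ^ n) s t)
    (hirr' : ∀ m : S → A, ∀ s t : S, ∃ n : ℕ, 0 < n ∧
      0 < ((Matrix.of fun s' t' => q' s' (m s') t') ^ n) s t)
    (α : S → A → ℝ) (hα : ∀ s, ∑ a, α s a = 1)
    (β : S → ℝ) (hβ : ∀ t, ∑ s, ∑ a, β s * α s a * q s a t = β t) :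
    ∀ t, ∑ s, ∑ a, β s * α s a * q' s a t = β t :=
  stmt_0_general q q' hq0 π hπpos hinv hinv' hirr α hα β hβ
end

section
/- Let Y, Y' be finite signal sets, S a finite state set, A an action set, and f(·|s,t,a) ∈ Δ(Y), f'(·|s,t',a) ∈ Δ(Y') conditional signal distributions, with q(·|s) ∈ Δ(S) a transition distribution with support S(s). Suppose for each s ∈ S there is a map T_s : S(s) → S(s) and, for each t ∈ S(s), nonnegative weights γ_{st}^{y'} ≥ 0 and distributions φ_{st}(·|y') ∈ Δ(Y) for each y' ∈ Y' such that f(y|s,t,a) = Σ_{y'∈Y'} γ_{st}^{y'} φ_{st}(y|y') f'(y'|s, T_s(t), a) for all y ∈ Y, a ∈ A. Define p(t,y|s,a) = f(y|s,t,a) q(t|s) and p'(t',y'|s,a) = f'(y'|s,t',a) q(t'|s). Then for each s ∈ S there exist weights γ_s^{t',y'} ≥ 0 and distributions φ_s(·,·|t',y') ∈ Δ(S × Y) such that p(t,y|s,a) = Σ_{(t',y')∈S×Y'} γ_s^{t',y'} φ_s(t,y|t',y') p'(t',y'|s,a) for all (t,y) ∈ S × Y and all a ∈ A. -/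
/-!
For fixed `s`, send the mass `γ_{st}^{y'} φ_{st}(y|y') q(t|s)` of `(t, y)` to the signal
`(T_s t, y')` and divide by `q(T_s t|s)`: this gives, for each `(t', y')`, a nonnegative vector on
`S × Y`, and any nonnegative vector is a nonnegative multiple of a probability vector. Division by
`q(t'|s) = 0` is harmless because `T_s` maps the support of `q(·|s)` into itself, so every `t` with
`T_s t = t'` then has `q(t|s) = 0` as well.
-/

open Finset

theorem exists_nonneg_smul_mem_stdSimplex {Z : Type*} [Fintype Z] [Nonempty Z] (w : Z → ℝ)
    (hw : ∀ z, 0 ≤ w z) : ∃ c : ℝ, 0 ≤ c ∧ ∃ μ ∈ stdSimplex ℝ Z, w = c • μ := by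
  classical
  obtain ⟨z₀⟩ := ‹Nonempty Z›
  have hc : 0 ≤ ∑ z, w z := sum_nonneg fun z _ => hw z
  rcases hc.eq_or_lt with hzero | hpos
  · refine ⟨0, le_rfl, Pi.single z₀ 1, single_mem_stdSimplex ℝ z₀, ?_⟩
    ext z
    simpa using (sum_eq_zero_iff_of_nonneg fun z _ => hw z).1 hzero.symm z (mem_univ z)
  · refine ⟨∑ z, w z, hc, (∑ z, w z)⁻¹ • w,
      ⟨fun z => smul_nonneg (inv_nonneg.2 hc) (hw z), by simp [← mul_sum, hpos.ne']⟩, ?_⟩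
    rw [smul_smul, mul_inv_cancel₀ hpos.ne', one_smul]

section FiberKernel

variable {S Y Y' : Type*} [DecidableEq S] (q : S → ℝ) (T : S → S) (γ : S → Y' → ℝ)
  (φ : S → Y' → Y → ℝ)

/-- The product `γ_s^{t', y'} φ_s(t, y|t', y')` of the paper, at a fixed `s`. -/
noncomputable def fiberKernel (t' : S) (y' : Y') (p : S × Y) : ℝ :=
  if T p.1 = t' then γ p.1 y' * φ p.1 y' p.2 * q p.1 / q t' else 0

variable {q T γ φ}

theorem fiberKernel_nonneg (hq : ∀ t, 0 ≤ q t) (hγ : ∀ t y', 0 ≤ γ t y')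
    (hφ : ∀ t y' y, 0 ≤ φ t y' y) (t' : S) (y' : Y') (p : S × Y) :
    0 ≤ fiberKernel q T γ φ t' y' p := by
  unfold fiberKernel
  split_ifs
  · have := hγ p.1 y'; have := hφ p.1 y' p.2; have := hq p.1; have := hq t'
    positivity
  · exact le_rfl

theorem fiberKernel_mul (hq : ∀ t, 0 ≤ q t) (hT : ∀ t, 0 < q t → 0 < q (T t))
    (t' : S) (y' : Y') (t : S) (y : Y) :
    fiberKernel q T γ φ t' y' (t, y) * q t' = if T t = t' then γ t y' * φ t y' y * q t else 0 := by
  unfold fiberKernel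
  split_ifs with hTt
  · subst hTt
    rcases (hq (T t)).eq_or_lt with hzero | hpos
    · have hqt : q t = 0 := by
        by_contra hne
        exact (hT t ((hq t).lt_of_ne (Ne.symm hne))).ne' hzero.symm
      simp [hqt]
    · field_simp
  · exact zero_mul _

theorem sum_fiberKernel_mul [Fintype S] [Fintype Y'] (hq : ∀ t, 0 ≤ q t)
    (hT : ∀ t, 0 < q t → 0 < q (T t)) (g : S → Y' → ℝ) (t : S) (y : Y) :
    ∑ t', ∑ y', fiberKernel q T γ φ t' y' (t, y) * (g t' y' * q t') =
      ∑ y', γ t y' * φ t y' y * g (T t) y' * q t := by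
  rw [sum_comm]
  refine sum_congr rfl fun y' _ => ?_
  calc ∑ t', fiberKernel q T γ φ t' y' (t, y) * (g t' y' * q t')
      = ∑ t', if T t = t' then γ t y' * φ t y' y * q t * g t' y' else 0 := by
        refine sum_congr rfl fun t' _ => ?_
        rw [mul_left_comm, fiberKernel_mul hq hT, mul_ite, mul_zero, mul_comm]
    _ = γ t y' * φ t y' y * g (T t) y' * q t := by
        rw [sum_ite_eq, if_pos (mem_univ _)]
        ring

end FiberKernel

theorem stmt_6_general {S Y Y' A : Type} [Fintype S] [Fintype Y] [Fintype Y']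
    (f : S → S → A → Y → ℝ) (f' : S → S → A → Y' → ℝ)
    (q : S → S → ℝ) (hq0 : ∀ s t, 0 ≤ q s t)
    (T : S → S → S)
    (hT : ∀ s t, 0 < q s t → 0 < q s (T s t))
    (γ : S → S → Y' → ℝ) (hγ : ∀ s t y', 0 ≤ γ s t y')
    (φ : S → S → Y' → Y → ℝ)
    (hφ0 : ∀ s t y' y, 0 ≤ φ s t y' y) (hφ1 : ∀ s t y', ∑ y, φ s t y' y = 1)
    (hWG : ∀ s t, 0 < q s t → ∀ a y,
      f s t a y = ∑ y', γ s t y' * φ s t y' y * f' s (T s t) a y') :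
    ∀ s : S, ∃ γs : S → Y' → ℝ, ∃ φs : S → Y' → S → Y → ℝ,
      (∀ t' y', 0 ≤ γs t' y') ∧
      (∀ t' y' t y, 0 ≤ φs t' y' t y) ∧
      (∀ t' y', ∑ t, ∑ y, φs t' y' t y = 1) ∧
      ∀ a : A, ∀ t y,
        f s t a y * q s t = ∑ t', ∑ y', γs t' y' * φs t' y' t y * (f' s t' a y' * q s t') := by
  intro s
  classical
  have hne (y' : Y') : Nonempty (S × Y) := by
    obtain ⟨y, -⟩ := nonempty_of_sum_ne_zero (hφ1 s s y' ▸ one_ne_zero)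
    exact ⟨(s, y)⟩
  choose Γ hΓ Φ hΦ hkernel using fun t' y' =>
    haveI := hne y'
    exists_nonneg_smul_mem_stdSimplex (fiberKernel (q s) (T s) (γ s) (φ s) t' y')
      (fiberKernel_nonneg (hq0 s) (hγ s) (hφ0 s) t' y')
  refine ⟨Γ, fun t' y' t y => Φ t' y' (t, y), hΓ, fun t' y' t y => (hΦ t' y').1 (t, y),
    fun t' y' => (Fintype.sum_prod_type' _).symm.trans (hΦ t' y').2, fun a t y => ?_⟩
  have hsum := sum_fiberKernel_mul (γ := γ s) (φ := φ s) (hq0 s) (hT s)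
    (fun t' y' => f' s t' a y') t y
  simp only [hkernel, Pi.smul_apply, smul_eq_mul] at hsum
  rw [hsum]
  rcases (hq0 s t).eq_or_lt with hzero | hpos
  · simp [← hzero]
  · rw [hWG s t hpos, sum_mul]

theorem stmt_6 {S Y Y' A : Type} [Fintype S] [Fintype Y] [Fintype Y']
    (f : S → S → A → Y → ℝ) (f' : S → S → A → Y' → ℝ)
    (hf0 : ∀ s t a y, 0 ≤ f s t a y) (hf1 : ∀ s t a, ∑ y, f s t a y = 1)
    (hf'0 : ∀ s t' a y', 0 ≤ f' s t' a y') (hf'1 : ∀ s t' a, ∑ y', f' s t' a y' = 1)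
    (q : S → S → ℝ) (hq0 : ∀ s t, 0 ≤ q s t) (hq1 : ∀ s, ∑ t, q s t = 1)
    (T : S → S → S)
    (hT : ∀ s t, 0 < q s t → 0 < q s (T s t))
    (γ : S → S → Y' → ℝ) (hγ : ∀ s t y', 0 ≤ γ s t y')
    (φ : S → S → Y' → Y → ℝ)
    (hφ0 : ∀ s t y' y, 0 ≤ φ s t y' y) (hφ1 : ∀ s t y', ∑ y, φ s t y' y = 1)
    (hWG : ∀ s t, 0 < q s t → ∀ a y,
      f s t a y = ∑ y', γ s t y' * φ s t y' y * f' s (T s t) a y') :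
    ∀ s : S, ∃ γs : S → Y' → ℝ, ∃ φs : S → Y' → S → Y → ℝ,
      (∀ t' y', 0 ≤ γs t' y') ∧
      (∀ t' y' t y, 0 ≤ φs t' y' t y) ∧
      (∀ t' y', ∑ t, ∑ y, φs t' y' t y = 1) ∧
      ∀ a : A, ∀ t y,
        f s t a y * q s t = ∑ t', ∑ y', γs t' y' * φs t' y' t y * (f' s t' a y' * q s t') :=
  stmt_6_general f f' q hq0 T hT γ hγ φ hφ0 hφ1 hWG
end

section
/- Blackwell's theorem for binary-state experiments (garbling direction used in the paper): Let Θ = {0, 1} with prior (1/2, 1/2), and let experiments P : Θ → Δ(Z) and P' : Θ → Δ(Z') be given on finite sets Z, Z'. If the distribution of posterior beliefs about state 1 induced by P' is a mean-preserving spread of the distribution of posterior beliefs induced by P, then P is a garbling of P': there exists a stochastic kernel φ : Z' → Δ(Z) such that P(z|θ) = Σ_{z'∈Z'} φ(z|z') P'(z'|θ) for all z ∈ Z and both θ ∈ Θ. -/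
/-!
If `P` were not a garbling of `P'`, it would lie outside the compact convex set of garblings of
`P'`, and a separating hyperplane yields a decision problem with action set `Z` in which `P` is
strictly more valuable than `P'`. With two states, the value of an experiment in a decision problem
is the expectation of a convex function of the posterior (the upper envelope of the affine payoffs
of the actions), so the mean-preserving spread hypothesis says the opposite.
-/

open Finset

theorem exists_dotProduct_lt_of_notMem {ι : Type*} [Fintype ι] {s : Set (ι → ℝ)} {x : ι → ℝ}
    (hconv : Convex ℝ s) (hclosed : IsClosed s) (hx : x ∉ s) :
    ∃ w : ι → ℝ, ∀ y ∈ s, w ⬝ᵥ y < w ⬝ᵥ x := by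
  classical
  obtain ⟨f, c, hfs, hfx⟩ := geometric_hahn_banach_closed_point hconv hclosed hx
  have hf : ∀ y, f y = (fun i => f fun j => if i = j then 1 else 0) ⬝ᵥ y := fun y => by
    rw [← f.coe_coe, LinearMap.pi_apply_eq_sum_univ, dotProduct]
    simp only [smul_eq_mul, mul_comm]
  exact ⟨_, fun y hy => by rw [← hf, ← hf]; exact (hfs y hy).trans hfx⟩

/-- The garbling of `P'` by a kernel `k`, uncurried to a vector indexed by `Θ × Z`. -/
def garbling {Θ Z Z' : Type*} [Fintype Z'] (P' : Θ → Z' → ℝ) : (Z' → Z → ℝ) →ₗ[ℝ] (Θ × Z → ℝ) where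
  toFun k i := ∑ z', k z' i.2 * P' i.1 z'
  map_add' k l := by
    funext i
    simp only [Pi.add_apply, add_mul, sum_add_distrib]
  map_smul' c k := by
    funext i
    simp only [Pi.smul_apply, smul_eq_mul, mul_sum, mul_assoc, RingHom.id_apply]

section Garbling

variable {Θ Z Z' A : Type*} [Fintype Θ] [Fintype Z] [Fintype Z'] [Fintype A]

/-- `|Θ|` times the ex-ante value, under the uniform prior, of the decision problem with utility
`u` when the action is chosen after observing the signal of `P`. -/
noncomputable def decisionValue [Nonempty A] (u : Θ → A → ℝ) (P : Θ → Z → ℝ) : ℝ :=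
  ∑ z, univ.sup' univ_nonempty fun a => ∑ θ, u θ a * P θ z

theorem sum_mul_le_decisionValue [Nonempty Z] (u : Θ → Z → ℝ) (P : Θ → Z → ℝ) :
    ∑ θ, ∑ z, u θ z * P θ z ≤ decisionValue u P := by
  rw [sum_comm]
  exact sum_le_sum fun z _ => le_sup' (fun a => ∑ θ, u θ a * P θ z) (mem_univ z)

theorem exists_stdSimplex_sum_garbling_eq_decisionValue [Nonempty A] (u : Θ → A → ℝ)
    (P' : Θ → Z' → ℝ) :
    ∃ k : Z' → A → ℝ, (∀ z', k z' ∈ stdSimplex ℝ A) ∧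
      ∑ θ, ∑ a, u θ a * ∑ z', k z' a * P' θ z' = decisionValue u P' := by
  classical
  choose σ hσ using fun z' => exists_mem_eq_sup' univ_nonempty fun a => ∑ θ, u θ a * P' θ z'
  refine ⟨fun z' => Pi.single (σ z') 1, fun z' => single_mem_stdSimplex ℝ (σ z'), ?_⟩
  calc ∑ θ, ∑ a, u θ a * ∑ z', (Pi.single (σ z') 1 : A → ℝ) a * P' θ z'
      = ∑ θ, ∑ z', u θ (σ z') * P' θ z' := by
        refine sum_congr rfl fun θ _ => ?_
        simp_rw [mul_sum]
        rw [sum_comm]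
        refine sum_congr rfl fun z' _ => ?_
        simp [Pi.single_apply]
    _ = decisionValue u P' := by
        rw [sum_comm, decisionValue]
        exact sum_congr rfl fun z' _ => (hσ z').2.symm

theorem exists_garbling_of_forall_decisionValue_le [Nonempty Z] {P : Θ → Z → ℝ}
    {P' : Θ → Z' → ℝ} (h : ∀ u : Θ → Z → ℝ, decisionValue u P ≤ decisionValue u P') :
    ∃ k : Z' → Z → ℝ, (∀ z' z, 0 ≤ k z' z) ∧ (∀ z', ∑ z, k z' z = 1) ∧
      ∀ θ z, P θ z = ∑ z', k z' z * P' θ z' := by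
  by_contra hne
  set kernels : Set (Z' → Z → ℝ) := Set.univ.pi fun _ => stdSimplex ℝ Z
  have hP : (fun i : Θ × Z => P i.1 i.2) ∉ garbling P' '' kernels := by
    rintro ⟨k, hk, hkP⟩
    exact hne ⟨k, fun z' => (hk z' trivial).1, fun z' => (hk z' trivial).2,
      fun θ z => (congrFun hkP (θ, z)).symm⟩
  have hconv : Convex ℝ (garbling P' '' kernels) :=
    (convex_pi fun _ _ => convex_stdSimplex ℝ Z).linear_image _
  have hclosed : IsClosed (garbling P' '' kernels) :=
    ((isCompact_univ_pi fun _ => isCompact_stdSimplex ℝ Z).image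
      (garbling P').continuous_of_finiteDimensional).isClosed
  obtain ⟨w, hw⟩ := exists_dotProduct_lt_of_notMem hconv hclosed hP
  set u : Θ → Z → ℝ := fun θ z => w (θ, z)
  obtain ⟨k, hk, hkv⟩ := exists_stdSimplex_sum_garbling_eq_decisionValue u P'
  have hlt := hw _ ⟨k, fun z' _ => hk z', rfl⟩
  simp only [dotProduct, Fintype.sum_prod_type, garbling, LinearMap.coe_mk, AddHom.coe_mk] at hlt
  linarith [sum_mul_le_decisionValue u P, h u]

end Garbling

section Binary

variable {Z A : Type*} [Fintype Z] [Fintype A] [Nonempty A]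

noncomputable def posteriorValue (u : Bool → A → ℝ) (p : ℝ) : ℝ :=
  univ.sup' univ_nonempty fun a => (1 - p) * u false a + p * u true a

theorem convexOn_posteriorValue (u : Bool → A → ℝ) : ConvexOn ℝ Set.univ (posteriorValue u) := by
  have hsup : posteriorValue u =
      univ.sup' univ_nonempty fun a p => (1 - p) * u false a + p * u true a :=
    funext fun p => by rw [Finset.sup'_apply]; rfl
  rw [hsup]
  refine sup'_induction _ _ (fun _ hf _ hg => hf.sup hg) fun a _ => ?_
  refine ⟨convex_univ, fun x _ y _ s t _ _ hst => le_of_eq ?_⟩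
  simp only [smul_eq_mul]
  linear_combination (-u false a) * hst

theorem mul_posteriorValue_div (u : Bool → A → ℝ) {q : Bool → ℝ} (hq : ∀ θ, 0 ≤ q θ) :
    (q false + q true) * posteriorValue u (q true / (q false + q true)) =
      univ.sup' univ_nonempty fun a => ∑ θ, u θ a * q θ := by
  rw [posteriorValue, mul₀_sup' (add_nonneg (hq false) (hq true))]
  refine sup'_congr _ rfl fun a _ => ?_
  rw [Fintype.sum_bool]
  rcases (add_nonneg (hq false) (hq true)).eq_or_lt with hzero | _
  · have hf : q false = 0 := by linarith [hq false, hq true]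
    have ht : q true = 0 := by linarith [hq false, hq true]
    simp [hf, ht]
  · field_simp
    ring

theorem decisionValue_eq_two_mul_sum_posteriorValue (u : Bool → A → ℝ) {P : Bool → Z → ℝ}
    (hP : ∀ θ z, 0 ≤ P θ z) :
    decisionValue u P = 2 * ∑ z, ((P false z + P true z) / 2) *
      posteriorValue u (P true z / (P false z + P true z)) := by
  rw [decisionValue, mul_sum]
  refine sum_congr rfl fun z _ => ?_
  rw [← mul_posteriorValue_div u (q := fun θ => P θ z) fun θ => hP θ z]
  ring

end Binary

theorem stmt_10_general {Z Z' : Type} [Fintype Z] [Fintype Z']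
    (P : Bool → Z → ℝ) (P' : Bool → Z' → ℝ)
    (hP0 : ∀ θ z, 0 ≤ P θ z) (hP1 : ∀ θ, ∑ z, P θ z = 1)
    (hP'0 : ∀ θ z', 0 ≤ P' θ z')
    (hmps : ∀ φ : ℝ → ℝ, ConvexOn ℝ (Set.Icc (0 : ℝ) 1) φ →
      ∑ z, ((P false z + P true z) / 2) * φ (P true z / (P false z + P true z)) ≤
        ∑ z', ((P' false z' + P' true z') / 2) * φ (P' true z' / (P' false z' + P' true z'))) :
    ∃ k : Z' → Z → ℝ, (∀ z' z, 0 ≤ k z' z) ∧ (∀ z', ∑ z, k z' z = 1) ∧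
      ∀ θ z, P θ z = ∑ z', k z' z * P' θ z' := by
  obtain ⟨z, -, -⟩ := exists_ne_zero_of_sum_ne_zero ((hP1 true).trans_ne one_ne_zero)
  have : Nonempty Z := ⟨z⟩
  refine exists_garbling_of_forall_decisionValue_le fun u => ?_
  rw [decisionValue_eq_two_mul_sum_posteriorValue u hP0,
    decisionValue_eq_two_mul_sum_posteriorValue u hP'0]
  gcongr
  exact hmps _ ((convexOn_posteriorValue u).subset (Set.subset_univ _) (convex_Icc 0 1))

theorem stmt_10 {Z Z' : Type} [Fintype Z] [Fintype Z']
    (P : Bool → Z → ℝ) (P' : Bool → Z' → ℝ)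
    (hP0 : ∀ θ z, 0 ≤ P θ z) (hP1 : ∀ θ, ∑ z, P θ z = 1)
    (hP'0 : ∀ θ z', 0 ≤ P' θ z') (hP'1 : ∀ θ, ∑ z', P' θ z' = 1)
    (hmps : ∀ φ : ℝ → ℝ, ConvexOn ℝ (Set.Icc (0 : ℝ) 1) φ →
      ∑ z, ((P false z + P true z) / 2) * φ (P true z / (P false z + P true z)) ≤
        ∑ z', ((P' false z' + P' true z') / 2) * φ (P' true z' / (P' false z' + P' true z'))) :
    ∃ k : Z' → Z → ℝ, (∀ z' z, 0 ≤ k z' z) ∧ (∀ z', ∑ z, k z' z = 1) ∧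
      ∀ θ z, P θ z = ∑ z', k z' z * P' θ z' :=
  stmt_10_general P P' hP0 hP1 hP'0 hmps
end

section
/- Let P, P' be binary experiments on Θ = {N, N−1} with finite signal sets, and suppose P is a weighted garbling of P': there exist γ^{z'} ≥ 0 and φ(·|z') ∈ Δ(Z), all φ(·|z') with common support D ⊆ Z equal to the common support of P(·|N) and P(·|N−1), such that P(z|θ) = Σ_{z'} γ^{z'} φ(z|z') P'(z'|θ) for all z ∈ Z and θ ∈ {N, N−1}. If the likelihood ratios of P satisfy −∞ < L_ ≤ P(z|N)/P(z|N−1) ≤ L̄ < ∞ for all z ∈ D with L_ < L̄, then there exist signals z'₁, z'₂ with γ^{z'₁}, γ^{z'₂} > 0 and P'(z'₁|N)/P'(z'₁|N−1) < P(z|N)/P(z|N−1) < P'(z'₂|N)/P'(z'₂|N−1) for every z ∈ D; consequently the closed likelihood-ratio interval [L_, L̄] of P is contained in the open likelihood-ratio interval of P'. -/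
/-! Restricted to the signals `z'` with `γ z' > 0`, the garbling writes `P(z|N)/P(z|N−1)` as the
average of the ratios `P'(z'|N)/P'(z'|N−1)` with weights `γ z' * φ(z|z') * P'(z'|N−1)`, all of
which are positive when `z` lies in the common support. If no such `z'` had ratio below `L_`,
the average at a signal attaining `L_` would force every ratio of `P'` to equal `L_`, and then
every signal of `P` would have ratio `L_`, contradicting `L_ < L̄`; symmetrically for `L̄`. -/

open Finset

theorem Finset.eq_of_sum_mul_eq_mul_sum {ι K : Type*} [CommRing K] [LinearOrder K]
    [IsStrictOrderedRing K] {s : Finset ι} {w r : ι → K} {c : K} (hw : ∀ i ∈ s, 0 < w i)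
    (hside : (∀ i ∈ s, c ≤ r i) ∨ ∀ i ∈ s, r i ≤ c)
    (hsum : ∑ i ∈ s, w i * r i = c * ∑ i ∈ s, w i) : ∀ i ∈ s, r i = c := by
  have hsum' : ∑ i ∈ s, w i * c = ∑ i ∈ s, w i * r i := by rw [← sum_mul, hsum, mul_comm]
  have hterm : ∀ i ∈ s, w i * c = w i * r i := by
    rcases hside with hle | hge
    · exact (sum_eq_sum_iff_of_le fun i hi => mul_le_mul_of_nonneg_left (hle i hi)
        (hw i hi).le).1 hsum'
    · exact fun i hi => ((sum_eq_sum_iff_of_le fun i hi => mul_le_mul_of_nonneg_left (hge i hi)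
        (hw i hi).le).1 hsum'.symm i hi).symm
  exact fun i hi => (mul_left_cancel₀ (hw i hi).ne' (hterm i hi)).symm

noncomputable def likelihoodRatio {α : Type*} (Q : Bool → α → ℝ) (x : α) : ℝ := Q true x / Q false x

section WeightedGarbling

variable {Z Z' : Type*} [Fintype Z'] {P : Bool → Z → ℝ} {P' : Bool → Z' → ℝ} {γ : Z' → ℝ}
  {φ : Z' → Z → ℝ}

theorem garbling_eq_sum_pos_weight (hγ : ∀ z', 0 ≤ γ z')
    (hWG : ∀ θ z, P θ z = ∑ z', γ z' * φ z' z * P' θ z') (θ : Bool) (z : Z) :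
    P θ z = ∑ z' with 0 < γ z', γ z' * φ z' z * P' θ z' := by
  rw [hWG, sum_filter_of_ne]
  exact fun z' _ h => (hγ z').lt_of_ne' (left_ne_zero_of_mul (left_ne_zero_of_mul h))

theorem garbling_true_eq_sum_mul_likelihoodRatio (hγ : ∀ z', 0 ≤ γ z')
    (hγfull : ∀ z', 0 < γ z' → 0 < P' false z')
    (hWG : ∀ θ z, P θ z = ∑ z', γ z' * φ z' z * P' θ z') (z : Z) :
    P true z = ∑ z' with 0 < γ z', γ z' * φ z' z * P' false z' * likelihoodRatio P' z' := by
  rw [garbling_eq_sum_pos_weight hγ hWG]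
  refine sum_congr rfl fun z' hz' => ?_
  rw [likelihoodRatio, mul_assoc _ (P' false z'),
    mul_div_cancel₀ _ (hγfull z' (mem_filter.1 hz').2).ne']

theorem likelihoodRatio_eq_of_forall_eq (hγ : ∀ z', 0 ≤ γ z')
    (hγfull : ∀ z', 0 < γ z' → 0 < P' false z')
    (hWG : ∀ θ z, P θ z = ∑ z', γ z' * φ z' z * P' θ z') {c : ℝ}
    (hc : ∀ z', 0 < γ z' → likelihoodRatio P' z' = c) {z : Z} (hz : P false z ≠ 0) :
    likelihoodRatio P z = c := by
  rw [likelihoodRatio, div_eq_iff hz, garbling_true_eq_sum_mul_likelihoodRatio hγ hγfull hWG,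
    garbling_eq_sum_pos_weight hγ hWG false, mul_sum]
  exact sum_congr rfl fun z' hz' => by rw [hc z' (mem_filter.1 hz').2]; ring

theorem likelihoodRatio_eq_of_attains_one_sided_bound (hγ : ∀ z', 0 ≤ γ z')
    (hγfull : ∀ z', 0 < γ z' → 0 < P' false z')
    (hWG : ∀ θ z, P θ z = ∑ z', γ z' * φ z' z * P' θ z') {c : ℝ}
    (hside : (∀ z', 0 < γ z' → c ≤ likelihoodRatio P' z') ∨
      ∀ z', 0 < γ z' → likelihoodRatio P' z' ≤ c)
    {z₀ : Z} (hφ : ∀ z', 0 < γ z' → 0 < φ z' z₀) (hz₀ : 0 < P false z₀)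
    (hz₀c : likelihoodRatio P z₀ = c) {z : Z} (hz : P false z ≠ 0) :
    likelihoodRatio P z = c := by
  have hP'c : ∀ z' ∈ ({z' | 0 < γ z'} : Finset Z'), likelihoodRatio P' z' = c := by
    refine eq_of_sum_mul_eq_mul_sum (w := fun z' => γ z' * φ z' z₀ * P' false z') ?_ ?_ ?_
    · intro z' hz'
      have hγz' := (mem_filter.1 hz').2
      exact mul_pos (mul_pos hγz' (hφ z' hγz')) (hγfull z' hγz')
    · simpa only [mem_filter, mem_univ, true_and] using hside
    · rw [← garbling_true_eq_sum_mul_likelihoodRatio hγ hγfull hWG,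
        ← garbling_eq_sum_pos_weight hγ hWG false]
      exact (div_eq_iff hz₀.ne').1 hz₀c
  exact likelihoodRatio_eq_of_forall_eq hγ hγfull hWG
    (fun z' hγz' => hP'c z' (mem_filter.2 ⟨mem_univ z', hγz'⟩)) hz

end WeightedGarbling

theorem stmt_14_general {Z Z' : Type} [Fintype Z']
    (P : Bool → Z → ℝ) (P' : Bool → Z' → ℝ)
    (γ : Z' → ℝ) (hγ : ∀ z', 0 ≤ γ z')
    (hγfull : ∀ z', 0 < γ z' → 0 < P' false z')
    (φ : Z' → Z → ℝ)
    -- common support: every kernel φ(·|z') has support equal to the common support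
    -- D = {z : P(z|N) > 0} = {z : P(z|N−1) > 0} of P(·|N) and P(·|N−1)
    (hφsupp : ∀ z' z, 0 < φ z' z ↔ 0 < P false z)
    (hWG : ∀ θ z, P θ z = ∑ z', γ z' * φ z' z * P' θ z')
    (Llo Lhi : ℝ) (hLlt : Llo < Lhi)
    (hbounds : ∀ z, 0 < P false z → Llo ≤ P true z / P false z ∧ P true z / P false z ≤ Lhi)
    (hattlo : ∃ z, 0 < P false z ∧ P true z / P false z = Llo)
    (hatthi : ∃ z, 0 < P false z ∧ P true z / P false z = Lhi) :
    ∃ z'₁ z'₂ : Z', 0 < γ z'₁ ∧ 0 < γ z'₂ ∧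
      (∀ z, 0 < P false z →
        P' true z'₁ / P' false z'₁ < P true z / P false z ∧
        P true z / P false z < P' true z'₂ / P' false z'₂) ∧
      P' true z'₁ / P' false z'₁ < Llo ∧ Lhi < P' true z'₂ / P' false z'₂ := by
  obtain ⟨zlo, hzlo, hLlo⟩ := hattlo
  obtain ⟨zhi, hzhi, hLhi⟩ := hatthi
  obtain ⟨z'₁, hγ₁, h₁⟩ : ∃ z', 0 < γ z' ∧ likelihoodRatio P' z' < Llo := by
    by_contra! hge
    have := likelihoodRatio_eq_of_attains_one_sided_bound hγ hγfull hWG (Or.inl hge)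
      (fun z' _ => (hφsupp z' zlo).2 hzlo) hzlo hLlo hzhi.ne'
    exact hLlt.ne (this.symm.trans hLhi)
  obtain ⟨z'₂, hγ₂, h₂⟩ : ∃ z', 0 < γ z' ∧ Lhi < likelihoodRatio P' z' := by
    by_contra! hle
    have := likelihoodRatio_eq_of_attains_one_sided_bound hγ hγfull hWG (Or.inr hle)
      (fun z' _ => (hφsupp z' zhi).2 hzhi) hzhi hLhi hzlo.ne'
    exact hLlt.ne (hLlo.symm.trans this)
  exact ⟨z'₁, z'₂, hγ₁, hγ₂,
    fun z hz => ⟨h₁.trans_le (hbounds z hz).1, (hbounds z hz).2.trans_lt h₂⟩, h₁, h₂⟩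

theorem stmt_14 {Z Z' : Type} [Fintype Z] [Fintype Z']
    (P : Bool → Z → ℝ) (P' : Bool → Z' → ℝ)
    (hP0 : ∀ θ z, 0 ≤ P θ z) (hP1 : ∀ θ, ∑ z, P θ z = 1)
    (hP'0 : ∀ θ z', 0 ≤ P' θ z') (hP'1 : ∀ θ, ∑ z', P' θ z' = 1)
    (γ : Z' → ℝ) (hγ : ∀ z', 0 ≤ γ z')
    (hγfull : ∀ z', 0 < γ z' → 0 < P' false z')
    (φ : Z' → Z → ℝ) (hφ0 : ∀ z' z, 0 ≤ φ z' z) (hφ1 : ∀ z', ∑ z, φ z' z = 1)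
    -- common support: every kernel φ(·|z') has support equal to the common support
    -- D = {z : P(z|N) > 0} = {z : P(z|N−1) > 0} of P(·|N) and P(·|N−1)
    (hsupp : ∀ z, 0 < P true z ↔ 0 < P false z)
    (hφsupp : ∀ z' z, 0 < φ z' z ↔ 0 < P false z)
    (hWG : ∀ θ z, P θ z = ∑ z', γ z' * φ z' z * P' θ z')
    (Llo Lhi : ℝ) (hLlt : Llo < Lhi)
    (hbounds : ∀ z, 0 < P false z → Llo ≤ P true z / P false z ∧ P true z / P false z ≤ Lhi)
    (hattlo : ∃ z, 0 < P false z ∧ P true z / P false z = Llo)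
    (hatthi : ∃ z, 0 < P false z ∧ P true z / P false z = Lhi) :
    ∃ z'₁ z'₂ : Z', 0 < γ z'₁ ∧ 0 < γ z'₂ ∧
      (∀ z, 0 < P false z →
        P' true z'₁ / P' false z'₁ < P true z / P false z ∧
        P true z / P false z < P' true z'₂ / P' false z'₂) ∧
      P' true z'₁ / P' false z'₁ < Llo ∧ Lhi < P' true z'₂ / P' false z'₂ :=
  stmt_14_general P P' γ hγ hγfull φ hφsupp hWG Llo Lhi hLlt hbounds hattlo hatthi
end

section
/- Let v⁻, v⁺, z ∈ ℝ with v⁻ + ε₀ < z < v⁺ − ε₀ for some ε₀ > 0, and κ₀ ≥ max(|z − v⁻|, |z − v⁺|). Fix n with ε₀(n−1)/2 > 2κ₀|S| for a finite set S, and δ ∈ (0,1) with 1 − δ^{n−1} ≥ (n−1)(1−δ)/2. For λ ∈ {−1, +1}, define w = z + ((1−δ^{n−1})/δ^{n−1})(z − v^λ) + T where |T| ≤ 2|S|κ₀(1−δ)/δ^{n−1} and v^{+1} = v⁺, v^{−1} = v⁻. Then λ·w < λ·z. -/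
/-!
Write `p = δ^(n-1)`. Then `λw - λz = ((1-p)/p) · λ(z - v^λ) + λT`. Since `z` lies more than `ε₀`
inside `(v⁻, v⁺)`, the drift `λ(z - v^λ)` is below `-ε₀`, so the first term is at most
`-ε₀(1-p)/p`, while `λT ≤ |T| ≤ 2|S|κ₀(1-δ)/p`. The choice of `n` and `δ` gives
`ε₀(1-p) ≥ ε₀(n-1)(1-δ)/2 > 2|S|κ₀(1-δ)`, so the drift wins.
-/

lemma mul_one_sub_lt_mul_of_half_mul_gt {ε m K q δ : ℝ} (hε : 0 < ε) (hδ : δ < 1)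
    (hm : ε * m / 2 > K) (hq : q ≥ m * (1 - δ) / 2) : K * (1 - δ) < ε * q := by
  have h1δ : 0 < 1 - δ := sub_pos.mpr hδ
  calc K * (1 - δ) < ε * m / 2 * (1 - δ) := mul_lt_mul_of_pos_right hm h1δ
    _ = ε * (m * (1 - δ) / 2) := by ring
    _ ≤ ε * q := mul_le_mul_of_nonneg_left hq hε.le

lemma mul_sub_lt_neg_of_mem_Ioo {vm vp z ε lam v : ℝ} (hzlo : vm + ε < z) (hzhi : z < vp - ε)
    (hlam : lam = 1 ∨ lam = -1) (hv : v = if lam = 1 then vp else vm) :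
    lam * (z - v) < -ε := by
  rcases hlam with rfl | rfl
  · rw [if_pos rfl] at hv; subst hv; linarith
  · rw [if_neg (by norm_num)] at hv; subst hv; linarith

lemma mul_le_abs_of_eq_one_or_eq_neg_one {lam t : ℝ} (hlam : lam = 1 ∨ lam = -1) :
    lam * t ≤ |t| := by
  rcases hlam with rfl | rfl
  · simpa using le_abs_self t
  · simpa using neg_le_abs t

lemma one_sub_div_mul_add_neg {p x t ε b : ℝ} (hp0 : 0 < p) (hp1 : p ≤ 1) (hx : x ≤ -ε)
    (ht : t ≤ b / p) (hb : b < ε * (1 - p)) : (1 - p) / p * x + t < 0 := by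
  have hc : 0 ≤ (1 - p) / p := div_nonneg (sub_nonneg.mpr hp1) hp0.le
  calc (1 - p) / p * x + t ≤ (1 - p) / p * -ε + b / p := by gcongr
    _ = (b - ε * (1 - p)) / p := by ring
    _ < 0 := div_neg_of_neg_of_pos (sub_neg.mpr hb) hp0

theorem stmt_17_general (vm vp z ε₀ κ₀ : ℝ) (hε : 0 < ε₀)
    (hzlo : vm + ε₀ < z) (hzhi : z < vp - ε₀)
    (cardS : ℕ) (n : ℕ)
    (hn : ε₀ * ((n : ℝ) - 1) / 2 > 2 * κ₀ * (cardS : ℝ))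
    (δ : ℝ) (hδ0 : 0 < δ) (hδ1 : δ < 1)
    (hgeo : 1 - δ ^ (n - 1) ≥ ((n : ℝ) - 1) * (1 - δ) / 2)
    (lam : ℝ) (hlam : lam = 1 ∨ lam = -1)
    (v : ℝ) (hv : v = if lam = 1 then vp else vm)
    (T : ℝ) (hT : |T| ≤ 2 * (cardS : ℝ) * κ₀ * (1 - δ) / δ ^ (n - 1))
    (w : ℝ) (hw : w = z + ((1 - δ ^ (n - 1)) / δ ^ (n - 1)) * (z - v) + T) :
    lam * w < lam * z := by
  have hgap : 2 * κ₀ * cardS * (1 - δ) < ε₀ * (1 - δ ^ (n - 1)) :=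
    mul_one_sub_lt_mul_of_half_mul_gt hε hδ1 hn hgeo
  have hdrift : lam * (z - v) ≤ -ε₀ := (mul_sub_lt_neg_of_mem_Ioo hzlo hzhi hlam hv).le
  have hlamT : lam * T ≤ 2 * cardS * κ₀ * (1 - δ) / δ ^ (n - 1) :=
    (mul_le_abs_of_eq_one_or_eq_neg_one hlam).trans hT
  have hneg := one_sub_div_mul_add_neg (pow_pos hδ0 _) (pow_le_one₀ hδ0.le hδ1.le) hdrift hlamT
    (by linarith)
  have hdiff :
      lam * w - lam * z = (1 - δ ^ (n - 1)) / δ ^ (n - 1) * (lam * (z - v)) + lam * T := by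
    rw [hw]; ring
  linarith

theorem stmt_17 (vm vp z ε₀ κ₀ : ℝ) (hε : 0 < ε₀)
    (hzlo : vm + ε₀ < z) (hzhi : z < vp - ε₀)
    (hκ : max |z - vm| |z - vp| ≤ κ₀)
    (cardS : ℕ) (n : ℕ)
    (hn : ε₀ * ((n : ℝ) - 1) / 2 > 2 * κ₀ * (cardS : ℝ))
    (δ : ℝ) (hδ0 : 0 < δ) (hδ1 : δ < 1)
    (hgeo : 1 - δ ^ (n - 1) ≥ ((n : ℝ) - 1) * (1 - δ) / 2)
    (lam : ℝ) (hlam : lam = 1 ∨ lam = -1)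
    (v : ℝ) (hv : v = if lam = 1 then vp else vm)
    (T : ℝ) (hT : |T| ≤ 2 * (cardS : ℝ) * κ₀ * (1 - δ) / δ ^ (n - 1))
    (w : ℝ) (hw : w = z + ((1 - δ ^ (n - 1)) / δ ^ (n - 1)) * (z - v) + T) :
    lam * w < lam * z :=
  stmt_17_general vm vp z ε₀ κ₀ hε hzlo hzhi cardS n hn δ hδ0 hδ1 hgeo lam hlam v hv T hT w hw
end
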